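/- Let M be a simple binary matroid with no coloops that is k-paving. Then the ground set of M is a circuit of M, or r(M) ≤ 3k + 1. -/

import Mathlib

namespace Matroid

variable {α : Type*}

/-- A circuit of a matroid is a minimal dependent set. -/
def Circuit (M : Matroid α) (C : Set α) : Prop :=
  M.Dep C ∧ ∀ D, D ⊂ C → M.Indep D

/-- A coloop is an element belonging to every basis. -/
def Coloop (M : Matroid α) (e : α) : Prop :=
  e ∈ M.E ∧ ∀ B, M.IsBase B → e ∈ B

/-- A matroid is simple if every subset of the ground set with at most two
elements is independent. -/
def Simple (M : Matroid α) : Prop :=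
  ∀ e ∈ M.E, ∀ f ∈ M.E, M.Indep {e, f}

/-- The rank of a matroid: the supremum of the cardinalities of its bases. -/
noncomputable def rk (M : Matroid α) : ℕ :=
  sSup {n | ∃ B, M.IsBase B ∧ B.ncard = n}

/-- A matroid is representable over a field `F` if independence in `M` coincides
with linear independence under some assignment of vectors to ground set elements. -/
def RepresentableOver (M : Matroid α) (F : Type) [Field F] : Prop :=
  ∃ (n : ℕ) (φ : α → (Fin n → F)),
    ∀ I, I ⊆ M.E → (M.Indep I ↔ LinearIndependent F (fun x : I => φ x))

/-- An element `e` is `k`-loose if every circuit containing `e` has size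
greater than `r - k`, where `r` is the rank of the matroid. -/
def KLoose (M : Matroid α) (k : ℕ) (e : α) : Prop :=
  e ∈ M.E ∧ ∀ C, M.Circuit C → e ∈ C → M.rk - k < C.ncard

/-- A matroid is `k`-paving if every element is `k`-loose. -/
def KPaving (M : Matroid α) (k : ℕ) : Prop :=
  ∀ e ∈ M.E, M.KLoose k e

end Matroid

/-!
If `M` has two distinct circuits, choose two, `C₁` and `C₂`, whose union `U` is as small as
possible. If three elements of `U` were outside a basis `I` of `U`, the fundamental circuits of two
of them with respect to `I` would be distinct circuits whose union misses the third; hence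
`|U| ≤ r + 2`. Over `GF(2)` the vectors of a circuit sum to zero, so `C₁ ∆ C₂` is dependent and
contains a circuit `C₃`, disjoint from `C₁ ∩ C₂`. Therefore `|C₁| + |C₂| + |C₃| ≤ 2|U| ≤ 2r + 4`,
while `k`-paving gives `|Cᵢ| ≥ r - k + 1` for each `i`, so `r ≤ 3k + 1`.
If `M` has at most one circuit, every element lies in it, since no element is a coloop.
-/

open scoped symmDiff

open Set in
lemma Set.ncard_add_ncard_add_ncard_le_of_subset_symmDiff {α : Type*} {s t u : Set α}
    (hs : s.Finite) (ht : t.Finite) (hu : u ⊆ s ∆ t) :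
    s.ncard + t.ncard + u.ncard ≤ 2 * (s ∪ t).ncard := by
  obtain ⟨hust, hdisj⟩ : u ⊆ s ∪ t ∧ Disjoint u (s ∩ t) :=
    subset_sdiff.1 (symmDiff_eq_sup_sdiff_inf s t ▸ hu)
  have hunion := ncard_union_add_ncard_inter s t hs ht
  have hsplit : u.ncard + (s ∩ t).ncard ≤ (s ∪ t).ncard := by
    rw [← ncard_union_eq hdisj ((hs.union ht).subset hust) (hs.inter_of_left t)]
    exact ncard_le_ncard (union_subset hust (inter_subset_left.trans subset_union_left))
      (hs.union ht)
  omega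

lemma Finset.sum_symmDiff_eq_add {ι W : Type*} [DecidableEq ι] [AddCommGroup W]
    [Module (ZMod 2) W] (s t : Finset ι) (f : ι → W) :
    ∑ i ∈ s ∆ t, f i = ∑ i ∈ s, f i + ∑ i ∈ t, f i := by
  have hcancel : ∀ w : W, w + w = 0 := fun w ↦ by
    rw [← two_smul (ZMod 2), show (2 : ZMod 2) = 0 from rfl, zero_smul]
  rw [Finset.symmDiff_def, Finset.sum_union disjoint_sdiff_sdiff,
    ← Finset.sum_sdiff (Finset.inter_subset_left : s ∩ t ⊆ s),
    ← Finset.sum_sdiff (Finset.inter_subset_right : s ∩ t ⊆ t),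
    Finset.sdiff_inter_self_left, Finset.sdiff_inter_self_right,
    add_add_add_comm, hcancel, add_zero]

namespace Matroid

open Set

variable {α : Type*} {M : Matroid α}

lemma circuit_iff_isCircuit {C : Set α} : M.Circuit C ↔ M.IsCircuit C := by
  rw [isCircuit_iff_forall_ssubset]
  exact Iff.rfl

lemma coloop_iff_isColoop {e : α} : M.Coloop e ↔ M.IsColoop e := by
  refine ⟨fun he ↦ isColoop_iff_forall_mem_isBase.2 fun B hB ↦ he.2 B hB, fun he ↦ ?_⟩
  exact ⟨he.mem_ground, fun B hB ↦ he.mem_of_isBase hB⟩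

lemma IsBase.ncard_eq_rk {B : Set α} (hB : M.IsBase B) : B.ncard = M.rk := by
  have hrk : {m | ∃ B', M.IsBase B' ∧ B'.ncard = m} = {B.ncard} := by
    ext m
    refine ⟨?_, fun hm ↦ ⟨B, hB, hm.symm⟩⟩
    rintro ⟨B', hB', rfl⟩
    exact hB'.ncard_eq_ncard_of_isBase hB
  rw [rk, hrk, csSup_singleton]

lemma Indep.ncard_le_rk [M.RankFinite] {I : Set α} (hI : M.Indep I) : I.ncard ≤ M.rk := by
  obtain ⟨B, hB, hIB⟩ := hI.exists_isBase_superset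
  exact hB.ncard_eq_rk ▸ ncard_le_ncard hIB hB.finite

lemma ground_nonempty_of_rk_pos (h : 0 < M.rk) : M.E.Nonempty := by
  obtain ⟨B, hB⟩ := M.exists_isBase
  rw [← hB.ncard_eq_rk] at h
  exact (nonempty_of_ncard_ne_zero h.ne').mono hB.subset_ground

lemma KPaving.rk_sub_lt_ncard {k : ℕ} (hM : M.KPaving k) {C : Set α} (hC : M.IsCircuit C) :
    M.rk - k < C.ncard := by
  obtain ⟨e, he⟩ := hC.nonempty
  exact (hM e (hC.subset_ground he)).2 C (circuit_iff_isCircuit.2 hC) he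

lemma isCircuit_ground_of_forall_isCircuit_eq (hE : M.E.Nonempty)
    (hcoloop : ∀ e ∈ M.E, ¬ M.IsColoop e)
    (h : ∀ C₁ C₂, M.IsCircuit C₁ → M.IsCircuit C₂ → C₁ = C₂) : M.IsCircuit M.E := by
  obtain ⟨e, he⟩ := hE
  obtain ⟨C, hC, -⟩ := exists_mem_isCircuit_of_not_isColoop he (hcoloop e he)
  suffices M.E ⊆ C from hC.subset_ground.antisymm this ▸ hC
  intro f hf
  obtain ⟨C', hC', hfC'⟩ := exists_mem_isCircuit_of_not_isColoop hf (hcoloop f hf)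
  exact h C' C hC' hC ▸ hfC'

lemma ncard_le_rk_add_two_of_forall_isCircuit [M.RankFinite] {X : Set α} (hXE : X ⊆ M.E)
    (hX : X.Finite)
    (h : ∀ C₁ C₂, M.IsCircuit C₁ → M.IsCircuit C₂ → C₁ ≠ C₂ → ¬ C₁ ∪ C₂ ⊂ X) :
    X.ncard ≤ M.rk + 2 := by
  obtain ⟨I, hI⟩ := M.exists_isBasis X hXE
  have hfund : ∀ e ∈ X \ I, M.IsCircuit (M.fundCircuit e I) := fun e he ↦
    hI.indep.fundCircuit_isCircuit (hI.subset_closure he.1) he.2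
  have hfund_sub : ∀ e ∈ X, M.fundCircuit e I ⊆ X := fun e he ↦
    (M.fundCircuit_subset_insert e I).trans (insert_subset he hI.subset)
  have hdiff : (X \ I).ncard ≤ 2 := by
    by_contra! hlt
    obtain ⟨u, hu, v, hv, w, hw, huv, huw, hvw⟩ := two_lt_ncard hX.sdiff |>.1 hlt
    have hne : M.fundCircuit u I ≠ M.fundCircuit v I := fun heq ↦ by
      obtain rfl | huI := M.fundCircuit_subset_insert v I (heq ▸ M.mem_fundCircuit u I)
      exacts [huv rfl, hu.2 huI]
    refine h _ _ (hfund u hu) (hfund v hv) hne <| ssubset_of_subset_of_ne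
      (union_subset (hfund_sub u hu.1) (hfund_sub v hv.1)) fun heq ↦ ?_
    obtain hwu | hwv := heq ▸ hw.1
    · obtain rfl | hwI := M.fundCircuit_subset_insert u I hwu
      exacts [huw rfl, hw.2 hwI]
    · obtain rfl | hwI := M.fundCircuit_subset_insert v I hwv
      exacts [hvw rfl, hw.2 hwI]
  calc X.ncard = (X \ I).ncard + I.ncard := (ncard_sdiff_add_ncard_of_subset hI.subset hX).symm
    _ ≤ M.rk + 2 := by linarith [hI.indep.ncard_le_rk]

lemma exists_isCircuit_pair_ncard_union_le [M.RankFinite]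
    (h : ∃ C₁ C₂, M.IsCircuit C₁ ∧ M.IsCircuit C₂ ∧ C₁ ≠ C₂) :
    ∃ C₁ C₂, M.IsCircuit C₁ ∧ M.IsCircuit C₂ ∧ C₁ ≠ C₂ ∧ (C₁ ∪ C₂).ncard ≤ M.rk + 2 := by
  classical
  have hex : ∃ m, ∃ C₁ C₂, M.IsCircuit C₁ ∧ M.IsCircuit C₂ ∧ C₁ ≠ C₂ ∧ (C₁ ∪ C₂).ncard = m :=
    let ⟨C₁, C₂, hC₁, hC₂, hne⟩ := h
    ⟨_, C₁, C₂, hC₁, hC₂, hne, rfl⟩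
  obtain ⟨C₁, C₂, hC₁, hC₂, hne, hmin⟩ := Nat.find_spec hex
  have hfin := hC₁.finite.union hC₂.finite
  refine ⟨C₁, C₂, hC₁, hC₂, hne, ncard_le_rk_add_two_of_forall_isCircuit
    (union_subset hC₁.subset_ground hC₂.subset_ground) hfin ?_⟩
  intro D₁ D₂ hD₁ hD₂ hD hssub
  have := Nat.find_min' hex ⟨D₁, D₂, hD₁, hD₂, hD, rfl⟩
  have := ncard_lt_ncard hssub hfin
  omega

def IsRepresentation (M : Matroid α) (F : Type*) [Field F] {W : Type*} [AddCommGroup W]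
    [Module F W] (φ : α → W) : Prop :=
  ∀ I ⊆ M.E, M.Indep I ↔ LinearIndepOn F φ I

lemma IsRepresentation.dep_of_sum_eq_zero {F W : Type*} [Field F] [AddCommGroup W] [Module F W]
    {φ : α → W} (hφ : M.IsRepresentation F φ) {T : Finset α} (hTE : ↑T ⊆ M.E)
    (hT : T.Nonempty) (h0 : ∑ x ∈ T, φ x = 0) : M.Dep T := by
  refine ⟨fun hT_indep ↦ ?_, hTE⟩
  obtain ⟨x, hx⟩ := hT
  exact one_ne_zero <|
    linearIndepOn_iff'.1 ((hφ _ hTE).1 hT_indep) T 1 subset_rfl (by simpa using h0) x hx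

section Binary

variable {W : Type*} [AddCommGroup W] [Module (ZMod 2) W] {φ : α → W}

lemma IsRepresentation.sum_eq_zero_of_isCircuit (hφ : M.IsRepresentation (ZMod 2) φ)
    {C : Finset α} (hC : M.IsCircuit C) : ∑ x ∈ C, φ x = 0 := by
  classical
  have hdep : ¬ LinearIndepOn (ZMod 2) φ (C : Set α) :=
    fun h ↦ hC.not_indep ((hφ _ hC.subset_ground).2 h)
  simp only [linearIndepOn_iff', not_forall] at hdep
  obtain ⟨t, g, htC, hsum, x, hxt, hgx⟩ := hdep
  have hone : ∀ a : ZMod 2, a ≠ 0 → a = 1 := by decide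
  set T := t.filter (g · ≠ 0)
  -- over `GF(2)` the support of a linear dependency is a zero-sum set
  have hT : ∑ y ∈ T, φ y = 0 := by
    rw [← hsum, Finset.sum_filter]
    refine Finset.sum_congr rfl fun y _ ↦ ?_
    split_ifs with hy
    · rw [hone _ hy, one_smul]
    · rw [not_not.1 hy, zero_smul]
  have hTC : (T : Set α) ⊆ C := (Finset.coe_subset.2 (Finset.filter_subset _ t)).trans htC
  have hTne : T.Nonempty := ⟨x, Finset.mem_filter.2 ⟨hxt, hgx⟩⟩
  rwa [← Finset.coe_inj.1 <| hC.eq_of_dep_subset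
    (hφ.dep_of_sum_eq_zero (hTC.trans hC.subset_ground) hTne hT) hTC]

lemma IsRepresentation.exists_isCircuit_subset_symmDiff [M.Finitary]
    (hφ : M.IsRepresentation (ZMod 2) φ) {C₁ C₂ : Set α} (hC₁ : M.IsCircuit C₁)
    (hC₂ : M.IsCircuit C₂) (hne : C₁ ≠ C₂) : ∃ C ⊆ C₁ ∆ C₂, M.IsCircuit C := by
  classical
  have hground := union_subset hC₁.subset_ground hC₂.subset_ground
  lift C₁ to Finset α using hC₁.finite
  lift C₂ to Finset α using hC₂.finite
  rw [← Finset.coe_symmDiff]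
  refine Dep.exists_isCircuit_subset (hφ.dep_of_sum_eq_zero ?_ ?_ ?_)
  · exact (Finset.coe_subset.2 Finset.symmDiff_subset_union).trans (by simpa using hground)
  · exact Finset.symmDiff_nonempty.2 (by exact_mod_cast hne)
  · rw [Finset.sum_symmDiff_eq_add, hφ.sum_eq_zero_of_isCircuit hC₁,
      hφ.sum_eq_zero_of_isCircuit hC₂, add_zero]

end Binary

end Matroid

theorem binary_paving_rank_bound_general {α : Type*} (k : ℕ) (M : Matroid α) [M.Finite]
    (hbinary : M.RepresentableOver (ZMod 2))
    (hcoloop : ∀ x, ¬ M.Coloop x) (hpaving : M.KPaving k) :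
    M.Circuit M.E ∨ M.rk ≤ 3 * k + 1 := by
  obtain ⟨n, φ, hφ⟩ := hbinary
  have hφ : M.IsRepresentation (ZMod 2) φ := hφ
  rw [Matroid.circuit_iff_isCircuit, or_iff_not_imp_right, not_le]
  intro hrk
  by_cases htwo : ∃ C₁ C₂, M.IsCircuit C₁ ∧ M.IsCircuit C₂ ∧ C₁ ≠ C₂
  · obtain ⟨C₁, C₂, hC₁, hC₂, hne, hunion⟩ := Matroid.exists_isCircuit_pair_ncard_union_le htwo
    obtain ⟨C₃, hC₃sub, hC₃⟩ := hφ.exists_isCircuit_subset_symmDiff hC₁ hC₂ hne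
    have hcount :=
      Set.ncard_add_ncard_add_ncard_le_of_subset_symmDiff hC₁.finite hC₂.finite hC₃sub
    have h₁ := hpaving.rk_sub_lt_ncard hC₁
    have h₂ := hpaving.rk_sub_lt_ncard hC₂
    have h₃ := hpaving.rk_sub_lt_ncard hC₃
    omega
  · push Not at htwo
    refine Matroid.isCircuit_ground_of_forall_isCircuit_eq
      (Matroid.ground_nonempty_of_rk_pos (by omega)) (fun e _ ↦ ?_) htwo
    exact Matroid.coloop_iff_isColoop.not.1 (hcoloop e)

/-- A simple binary matroid with no coloops that is `k`-paving is a circuit, or has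
rank at most `3k + 1`. -/
theorem binary_paving_rank_bound {α : Type*} (k : ℕ) (M : Matroid α) [M.Finite]
    (hsimple : M.Simple) (hbinary : M.RepresentableOver (ZMod 2))
    (hcoloop : ∀ x, ¬ M.Coloop x) (hpaving : M.KPaving k) :
    M.Circuit M.E ∨ M.rk ≤ 3 * k + 1 :=
  binary_paving_rank_bound_general k M hbinary hcoloop hpaving
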